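/- For every non-negative integer n, (-27)^n * Σ_{k=0}^n ((1/3)_k (2/3)_{n-k} / ((1)_k (1)_{n-k}))^2 = Σ_{k=0}^n C(3k,k) * C(2k,k)^2 * C(n+k, n-k) * (-27)^{n-k}. -/

import Mathlib

/-!
Both sides are diagonal sums `∑_{k+m=n} F k m` of hypergeometric terms. For each of them,
Zeilberger's algorithm gives a certificate `G = R • F` with `R` rational, which turns the recurrence
`(n+2)³ u(n+2) + 3(2n+3)(9n²+27n+23) u(n+1) + 729(n+1)³ u(n) = 0` into a telescoping identity in
the second index. Summing it over the antidiagonal shows that both sides satisfy this recurrence,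
and they agree for `n = 0, 1`.
-/

open Finset

section Telescoping

variable {R : Type*}

def diagSum [AddCommMonoid R] (f : ℕ → ℕ → R) (n : ℕ) : R :=
  ∑ p ∈ antidiagonal n, f p.1 p.2

theorem sum_antidiagonal_telescope [AddCommGroup R] (G : ℕ → ℕ → R) (n : ℕ) :
    ∑ p ∈ antidiagonal n, (G (p.1 + 1) p.2 - G p.1 (p.2 + 1)) = G (n + 1) 0 - G 0 (n + 1) := by
  induction n generalizing G with
  | zero => simp
  | succ n ih =>
    rw [Nat.sum_antidiagonal_succ, ih fun k m => G (k + 1) m]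
    abel

theorem diagSum_recurrence_of_telescoping [CommRing R] (a b c : ℕ → R) (f G : ℕ → ℕ → R)
    (htele : ∀ k m, a (k + m) * f k (m + 2) + b (k + m) * f k (m + 1) + c (k + m) * f k m
      = G (k + 1) (m + 1) - G k (m + 2))
    (hcorner₁ : ∀ n, a n * f (n + 1) 1 + b n * f (n + 1) 0 = G (n + 2) 0 - G (n + 1) 1)
    (hcorner₂ : ∀ n, a n * f (n + 2) 0 = -G (n + 2) 0)
    (hedge : ∀ m, G 0 (m + 2) = 0) (n : ℕ) :
    a n * diagSum f (n + 2) + b n * diagSum f (n + 1) + c n * diagSum f n = 0 := by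
  have hsum : ∑ p ∈ antidiagonal n,
      (a n * f p.1 (p.2 + 2) + b n * f p.1 (p.2 + 1) + c n * f p.1 p.2)
        = G (n + 1) 1 - G 0 (n + 2) := by
    rw [← sum_antidiagonal_telescope fun k m => G k (m + 1)]
    refine sum_congr rfl fun p hp => ?_
    rw [← mem_antidiagonal.mp hp, htele]
  rw [sum_add_distrib, sum_add_distrib, ← mul_sum, ← mul_sum, ← mul_sum] at hsum
  simp only [diagSum, Nat.sum_antidiagonal_succ', add_assoc, Nat.reduceAdd]
  linear_combination hsum + hcorner₁ n + hcorner₂ n - hedge n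

theorem eq_of_second_order_recurrence [CommRing R] [IsDomain R] (a b c : ℕ → R)
    (ha : ∀ n, a n ≠ 0) (u v : ℕ → R) (hu : ∀ n, a n * u (n + 2) + b n * u (n + 1) + c n * u n = 0)
    (hv : ∀ n, a n * v (n + 2) + b n * v (n + 1) + c n * v n = 0)
    (h₀ : u 0 = v 0) (h₁ : u 1 = v 1) : u = v := by
  suffices h : ∀ n, u n = v n ∧ u (n + 1) = v (n + 1) from funext fun n => (h n).1
  intro n
  induction n with
  | zero => exact ⟨h₀, h₁⟩
  | succ n ih =>
    refine ⟨ih.2, mul_left_cancel₀ (ha n) ?_⟩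
    linear_combination hu n - hv n - b n * ih.2 - c n * ih.1

end Telescoping

namespace CubicBinomialSum

open Nat

def coeff₂ (n : ℕ) : ℚ := ((n : ℚ) + 2) ^ 3
def coeff₁ (n : ℕ) : ℚ := 3 * (2 * (n : ℚ) + 3) * (9 * (n : ℚ) ^ 2 + 27 * n + 23)
def coeff₀ (n : ℕ) : ℚ := 729 * ((n : ℚ) + 1) ^ 3

noncomputable def lhsTerm (k m : ℕ) : ℚ :=
  (-27) ^ (k + m) *
    ((ascPochhammer ℚ k).eval (1/3) * (ascPochhammer ℚ m).eval (2/3) /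
      ((ascPochhammer ℚ k).eval 1 * (ascPochhammer ℚ m).eval 1)) ^ 2

def rhsTerm (k m : ℕ) : ℚ :=
  (choose (3 * k) k : ℚ) * (choose (2 * k) k) ^ 2 * (choose (2 * k + m) m) * (-27) ^ m

theorem lhsTerm_succ_right (k m : ℕ) :
    lhsTerm k (m + 1) = -3 * (3 * m + 2) ^ 2 / ((m : ℚ) + 1) ^ 2 * lhsTerm k m := by
  simp only [lhsTerm, ascPochhammer_succ_eval, ascPochhammer_eval_one]
  field_simp
  ring

theorem lhsTerm_succ_left (k m : ℕ) :
    lhsTerm (k + 1) m = -3 * (3 * k + 1) ^ 2 / ((k : ℚ) + 1) ^ 2 * lhsTerm k m := by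
  simp only [lhsTerm, ascPochhammer_succ_eval, ascPochhammer_eval_one]
  field_simp
  ring

theorem rhsTerm_eq_factorial (k m : ℕ) :
    rhsTerm k m = (3 * k)! * (2 * k + m)! * (-27) ^ m / ((k ! : ℚ) ^ 5 * m !) := by
  rw [rhsTerm, cast_choose ℚ (by omega : k ≤ 3 * k), cast_choose ℚ (by omega : k ≤ 2 * k),
    cast_choose ℚ (by omega : m ≤ 2 * k + m), show 3 * k - k = 2 * k by omega,
    show 2 * k - k = k by omega, Nat.add_sub_cancel]
  field_simp

theorem rhsTerm_succ_right (k m : ℕ) :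
    rhsTerm k (m + 1) = -27 * (2 * k + m + 1) / ((m : ℚ) + 1) * rhsTerm k m := by
  rw [rhsTerm_eq_factorial, rhsTerm_eq_factorial, ← add_assoc, factorial_succ, factorial_succ]
  push_cast
  field_simp
  ring

theorem rhsTerm_succ_left (k m : ℕ) :
    rhsTerm (k + 1) m = (3 * k + 1) * (3 * k + 2) * (3 * k + 3) * (2 * k + m + 1) * (2 * k + m + 2)
      / ((k : ℚ) + 1) ^ 5 * rhsTerm k m := by
  rw [rhsTerm_eq_factorial, rhsTerm_eq_factorial, show 3 * (k + 1) = 3 * k + 2 + 1 by ring,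
    show 2 * (k + 1) + m = 2 * k + m + 1 + 1 by ring, factorial_succ, factorial_succ (3 * k + 1),
    factorial_succ (3 * k), factorial_succ (2 * k + m + 1), factorial_succ (2 * k + m),
    factorial_succ k]
  push_cast
  field_simp
  ring

noncomputable def lhsCert (k m : ℕ) : ℚ :=
  (k : ℚ) ^ 2 * (k * (6 * m - 1) + 3 * m * (m - 1)) / (3 * m - 1) ^ 2 * lhsTerm k m

-- The denominator vanishes only for `k = 0`, `m ≤ 1`, where the factor `k ^ 4` kills the term.
def rhsCert (k m : ℕ) : ℚ :=
  -2 * (k : ℚ) ^ 4 * (2 * k + 2 * m - 1) / ((2 * k + m) * (2 * k + m - 1)) * rhsTerm k m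

theorem lhsTerm_telescoping (k m : ℕ) :
    coeff₂ (k + m) * lhsTerm k (m + 2) + coeff₁ (k + m) * lhsTerm k (m + 1)
      + coeff₀ (k + m) * lhsTerm k m = lhsCert (k + 1) (m + 1) - lhsCert k (m + 2) := by
  have h₁ : 3 * ((m : ℚ) + 1) - 1 ≠ 0 := by linarith [m.cast_nonneg (α := ℚ)]
  have h₂ : 3 * ((m : ℚ) + 2) - 1 ≠ 0 := by linarith [m.cast_nonneg (α := ℚ)]
  simp only [lhsCert, coeff₂, coeff₁, coeff₀, lhsTerm_succ_right, lhsTerm_succ_left]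
  push_cast
  field_simp
  ring

theorem rhsTerm_telescoping (k m : ℕ) :
    coeff₂ (k + m) * rhsTerm k (m + 2) + coeff₁ (k + m) * rhsTerm k (m + 1)
      + coeff₀ (k + m) * rhsTerm k m = rhsCert (k + 1) (m + 1) - rhsCert k (m + 2) := by
  simp only [rhsCert, coeff₂, coeff₁, coeff₀, rhsTerm_succ_right, rhsTerm_succ_left]
  push_cast
  ring_nf
  field_simp
  ring

theorem lhsCert_zero_left (m : ℕ) : lhsCert 0 m = 0 := by
  simp [lhsCert]

theorem rhsCert_zero_left (m : ℕ) : rhsCert 0 m = 0 := by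
  simp [rhsCert]

theorem lhsTerm_corner₁ (n : ℕ) :
    coeff₂ n * lhsTerm (n + 1) 1 + coeff₁ n * lhsTerm (n + 1) 0
      = lhsCert (n + 2) 0 - lhsCert (n + 1) 1 := by
  simp only [lhsCert, coeff₂, coeff₁, lhsTerm_succ_right, lhsTerm_succ_left]
  push_cast
  field_simp
  ring

theorem lhsTerm_corner₂ (n : ℕ) : coeff₂ n * lhsTerm (n + 2) 0 = -lhsCert (n + 2) 0 := by
  simp only [lhsCert, coeff₂]
  push_cast
  ring

theorem rhsTerm_corner₁ (n : ℕ) :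
    coeff₂ n * rhsTerm (n + 1) 1 + coeff₁ n * rhsTerm (n + 1) 0
      = rhsCert (n + 2) 0 - rhsCert (n + 1) 1 := by
  simp only [rhsCert, coeff₂, coeff₁, rhsTerm_succ_right, rhsTerm_succ_left]
  push_cast
  ring_nf
  field_simp
  ring

theorem rhsTerm_corner₂ (n : ℕ) : coeff₂ n * rhsTerm (n + 2) 0 = -rhsCert (n + 2) 0 := by
  simp only [rhsCert, coeff₂]
  push_cast
  ring_nf
  field_simp
  ring

theorem diagSum_lhsTerm_recurrence (n : ℕ) :
    coeff₂ n * diagSum lhsTerm (n + 2) + coeff₁ n * diagSum lhsTerm (n + 1)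
      + coeff₀ n * diagSum lhsTerm n = 0 :=
  diagSum_recurrence_of_telescoping _ _ _ _ _ lhsTerm_telescoping lhsTerm_corner₁ lhsTerm_corner₂
    (fun _ => lhsCert_zero_left _) n

theorem diagSum_rhsTerm_recurrence (n : ℕ) :
    coeff₂ n * diagSum rhsTerm (n + 2) + coeff₁ n * diagSum rhsTerm (n + 1)
      + coeff₀ n * diagSum rhsTerm n = 0 :=
  diagSum_recurrence_of_telescoping _ _ _ _ _ rhsTerm_telescoping rhsTerm_corner₁ rhsTerm_corner₂
    (fun _ => rhsCert_zero_left _) n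

theorem diagSum_lhsTerm_eq_diagSum_rhsTerm : diagSum lhsTerm = diagSum rhsTerm := by
  refine eq_of_second_order_recurrence coeff₂ coeff₁ coeff₀
    (fun n => by unfold coeff₂; positivity) _ _ diagSum_lhsTerm_recurrence
    diagSum_rhsTerm_recurrence ?_ ?_
  · simp [diagSum, lhsTerm, rhsTerm]
  · norm_num [diagSum, Nat.sum_antidiagonal_succ, lhsTerm, rhsTerm]

end CubicBinomialSum

open CubicBinomialSum in
theorem stmt_2 (n : ℕ) :
    (-27 : ℚ) ^ n *
      ∑ k ∈ Finset.range (n + 1),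
        ((ascPochhammer ℚ k).eval (1/3) * (ascPochhammer ℚ (n - k)).eval (2/3) /
          ((ascPochhammer ℚ k).eval 1 * (ascPochhammer ℚ (n - k)).eval 1)) ^ 2
    = ∑ k ∈ Finset.range (n + 1),
        (Nat.choose (3*k) k : ℚ) * (Nat.choose (2*k) k) ^ 2 *
          (Nat.choose (n + k) (n - k)) * (-27 : ℚ) ^ (n - k) := by
  have h := congrFun diagSum_lhsTerm_eq_diagSum_rhsTerm n
  rw [diagSum, diagSum, Nat.sum_antidiagonal_eq_sum_range_succ lhsTerm,
    Nat.sum_antidiagonal_eq_sum_range_succ rhsTerm] at h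
  rw [mul_sum]
  convert h using 1 <;> refine sum_congr rfl fun k hk => ?_
  · rw [lhsTerm, Nat.add_sub_cancel' (mem_range_succ_iff.mp hk)]
  · rw [rhsTerm, show 2 * k + (n - k) = n + k by grind [mem_range_succ_iff]]
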